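/- Let s : ℝ^D → ℝ^D be a continuously differentiable vector field such that s and its Jacobian grow at most polynomially, and let v ~ N(0, σ²I) be a Gaussian random vector with σ > 0. Then E_v[div s(x + v)] = E_v[(vᵀ s(x + v)) / σ²] for every x ∈ ℝ^D. -/

import Mathlib

/-!
Under `N(0, σ²I)` the vector `v` has the product density `φ(v) = ∏ᵢ gaussianPDFReal 0 σ² (vᵢ)`,
whose partial derivatives are `∂ᵢφ = -(vᵢ / σ²) φ`. Integrating `φ · ∂ᵢ (sᵢ (x + ·))` by parts on
`ℝ^D` therefore gives `E[vᵢ sᵢ(x + v)] / σ²`, and summing over `i` gives the identity. Polynomial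
growth of `s` and of its derivative makes all integrands integrable against `φ`, which is what
the integration by parts needs.
-/

open MeasureTheory Real ProbabilityTheory

noncomputable def divg {D : ℕ} (s : (Fin D → ℝ) → (Fin D → ℝ)) (y : Fin D → ℝ) : ℝ :=
  ∑ i, fderiv ℝ (fun z => s z i) y (Pi.single i 1)

open scoped ENNReal NNReal

namespace MeasureTheory

theorem lintegral_fin_nat_prod_eq_prod {n : ℕ} {E : Type*} [MeasurableSpace E]
    {μ : Fin n → Measure E} [∀ i, SigmaFinite (μ i)] {f : Fin n → E → ℝ≥0∞}
    (hf : ∀ i, Measurable (f i)) :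
    ∫⁻ x, ∏ i, f i (x i) ∂Measure.pi μ = ∏ i, ∫⁻ x, f i x ∂μ i := by
  induction n with
  | zero => simp
  | succ n ih =>
    rw [← (measurePreserving_piFinSuccAbove μ 0).symm.lintegral_comp_emb
      (MeasurableEquiv.measurableEmbedding _)]
    simp only [MeasurableEquiv.piFinSuccAbove_symm_apply, Fin.insertNthEquiv,
      Fin.prod_univ_succ, Fin.insertNth_zero, Fin.zero_succAbove, Equiv.coe_fn_mk,
      Fin.cons_zero, Fin.cons_succ, cast_eq]
    rw [lintegral_prod_mul (f := f 0) (g := fun y : Fin n → E ↦ ∏ i, f i.succ (y i))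
      (hf 0).aemeasurable (Finset.measurable_prod _ fun i _ ↦
        (hf i.succ).comp (measurable_pi_apply i)).aemeasurable, ih fun i ↦ hf i.succ]

theorem Measure.pi_withDensity {n : ℕ} {E : Type*} [MeasurableSpace E]
    {μ : Fin n → Measure E} [∀ i, SigmaFinite (μ i)] {f : Fin n → E → ℝ≥0∞}
    [∀ i, SigmaFinite ((μ i).withDensity (f i))] (hf : ∀ i, Measurable (f i)) :
    Measure.pi (fun i ↦ (μ i).withDensity (f i))
      = (Measure.pi μ).withDensity fun x ↦ ∏ i, f i (x i) := by
  refine Measure.pi_eq fun s hs ↦ ?_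
  rw [withDensity_apply _ (MeasurableSet.univ_pi hs), Measure.restrict_pi_pi,
    lintegral_fin_nat_prod_eq_prod hf]
  exact Finset.prod_congr rfl fun i _ ↦ (withDensity_apply _ (hs i)).symm

end MeasureTheory

section PolynomialGrowth

variable {𝕜 E F G : Type*}

def HasPolynomialGrowth [Norm E] [Norm F] (f : E → F) : Prop :=
  ∃ C : ℝ, ∃ k : ℕ, ∀ x, ‖f x‖ ≤ C * (1 + ‖x‖) ^ k

variable [SeminormedAddCommGroup E] [SeminormedAddCommGroup F] [SeminormedAddCommGroup G]
  {f : E → F}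

theorem HasPolynomialGrowth.exists_nonneg (hf : HasPolynomialGrowth f) :
    ∃ C, 0 ≤ C ∧ ∃ k : ℕ, ∀ x, ‖f x‖ ≤ C * (1 + ‖x‖) ^ k := by
  obtain ⟨C, k, h⟩ := hf
  exact ⟨max C 0, le_max_right _ _, k, fun x ↦ (h x).trans (by gcongr; exact le_max_left _ _)⟩

theorem hasPolynomialGrowth_id : HasPolynomialGrowth (id : E → E) :=
  ⟨1, 1, fun x ↦ by simp⟩

theorem HasPolynomialGrowth.mono {g : E → G} (hf : HasPolynomialGrowth f) (c : ℝ)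
    (h : ∀ x, ‖g x‖ ≤ c * ‖f x‖) : HasPolynomialGrowth g := by
  obtain ⟨C, hC, k, hk⟩ := hf.exists_nonneg
  refine ⟨|c| * C, k, fun x ↦ ?_⟩
  calc ‖g x‖ ≤ |c| * ‖f x‖ := (h x).trans (by gcongr; exact le_abs_self c)
    _ ≤ |c| * (C * (1 + ‖x‖) ^ k) := by gcongr; exact hk x
    _ = |c| * C * (1 + ‖x‖) ^ k := by ring

theorem HasPolynomialGrowth.apply {ι : Type*} [Fintype ι] {f : E → ι → F}
    (hf : HasPolynomialGrowth f) (i : ι) : HasPolynomialGrowth fun x ↦ f x i :=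
  hf.mono 1 fun x ↦ by simpa using norm_le_pi_norm (f x) i

theorem HasPolynomialGrowth.clm_apply [NontriviallyNormedField 𝕜] [NormedSpace 𝕜 F]
    [NormedSpace 𝕜 G] {f : E → F →L[𝕜] G} (hf : HasPolynomialGrowth f) (w : F) :
    HasPolynomialGrowth fun x ↦ f x w :=
  hf.mono ‖w‖ fun x ↦ by rw [mul_comm]; exact (f x).le_opNorm w

theorem HasPolynomialGrowth.mul {R : Type*} [SeminormedRing R] {f g : E → R}
    (hf : HasPolynomialGrowth f) (hg : HasPolynomialGrowth g) :
    HasPolynomialGrowth fun x ↦ f x * g x := by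
  obtain ⟨C₁, hC₁, k₁, h₁⟩ := hf.exists_nonneg
  obtain ⟨C₂, k₂, h₂⟩ := hg
  refine ⟨C₁ * C₂, k₁ + k₂, fun x ↦ ?_⟩
  calc ‖f x * g x‖ ≤ ‖f x‖ * ‖g x‖ := norm_mul_le _ _
    _ ≤ C₁ * (1 + ‖x‖) ^ k₁ * (C₂ * (1 + ‖x‖) ^ k₂) :=
      mul_le_mul (h₁ x) (h₂ x) (norm_nonneg _) (by positivity)
    _ = C₁ * C₂ * (1 + ‖x‖) ^ (k₁ + k₂) := by ring

theorem HasPolynomialGrowth.comp_const_add (hf : HasPolynomialGrowth f) (a : E) :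
    HasPolynomialGrowth fun x ↦ f (a + x) := by
  obtain ⟨C, hC, k, h⟩ := hf.exists_nonneg
  refine ⟨C * (1 + ‖a‖) ^ k, k, fun x ↦ (h (a + x)).trans ?_⟩
  calc C * (1 + ‖a + x‖) ^ k ≤ C * ((1 + ‖a‖) * (1 + ‖x‖)) ^ k := by
        gcongr; nlinarith [norm_add_le a x, norm_nonneg a, norm_nonneg x]
    _ = C * (1 + ‖a‖) ^ k * (1 + ‖x‖) ^ k := by rw [mul_pow, mul_assoc]

end PolynomialGrowth

theorem one_add_norm_le_prod_one_add_abs {ι : Type*} [Fintype ι] (x : ι → ℝ) :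
    1 + ‖x‖ ≤ ∏ i, (1 + |x i|) := by
  classical
  have h1 : ∀ i, 1 ≤ 1 + |x i| := fun i ↦ le_add_of_nonneg_right (abs_nonneg _)
  suffices ‖x‖ ≤ (∏ i, (1 + |x i|)) - 1 by linarith
  refine (pi_norm_le_iff_of_nonneg (sub_nonneg.2 (Finset.one_le_prod fun i _ ↦ h1 i))).2
    fun i ↦ ?_
  have := Finset.one_le_prod (s := Finset.univ.erase i) fun j _ ↦ h1 j
  rw [Real.norm_eq_abs, ← Finset.mul_prod_erase _ _ (Finset.mem_univ i)]
  nlinarith [abs_nonneg (x i)]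

namespace ProbabilityTheory

section Density

variable {ι : Type*} [Fintype ι]

noncomputable def gaussianPDFRealPi (m : ℝ) (V : ℝ≥0) (x : ι → ℝ) : ℝ :=
  ∏ i, gaussianPDFReal m V (x i)

theorem gaussianPDFRealPi_nonneg (m : ℝ) (V : ℝ≥0) (x : ι → ℝ) :
    0 ≤ gaussianPDFRealPi m V x :=
  Finset.prod_nonneg fun i _ ↦ gaussianPDFReal_nonneg m V (x i)

theorem measurable_gaussianPDFRealPi (m : ℝ) (V : ℝ≥0) :
    Measurable (gaussianPDFRealPi (ι := ι) m V) :=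
  Finset.measurable_prod _ fun i _ ↦ (measurable_gaussianPDFReal m V).comp (measurable_pi_apply i)

theorem hasDerivAt_gaussianPDFReal (m : ℝ) (V : ℝ≥0) (t : ℝ) :
    HasDerivAt (gaussianPDFReal m V) (-((t - m) / V) * gaussianPDFReal m V t) t := by
  have hexp : HasDerivAt (fun u ↦ -(u - m) ^ 2 / (2 * V)) (-((t - m) / V)) t :=
    ((((hasDerivAt_id t).sub_const m).pow 2).neg.div_const (2 * (V : ℝ))).congr_deriv
      (by simp only [id_eq, Nat.cast_ofNat]; ring)
  exact (hexp.exp.const_mul (√(2 * π * V))⁻¹).congr_deriv (by rw [gaussianPDFReal]; ring)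

theorem hasFDerivAt_gaussianPDFRealPi (m : ℝ) (V : ℝ≥0) (x : ι → ℝ) :
    HasFDerivAt (gaussianPDFRealPi m V) (gaussianPDFRealPi m V x •
      ∑ j, (-((x j - m) / V)) • ContinuousLinearMap.proj (R := ℝ) (φ := fun _ : ι ↦ ℝ) j) x := by
  classical
  have hprod := HasFDerivAt.finsetProd (u := Finset.univ) fun j _ ↦
    (hasDerivAt_gaussianPDFReal m V (x j)).comp_hasFDerivAt (f := fun y : ι → ℝ ↦ y j) x
      (ContinuousLinearMap.proj j : (ι → ℝ) →L[ℝ] ℝ).hasFDerivAt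
  refine hprod.congr_fderiv (ContinuousLinearMap.ext fun v ↦ ?_)
  simp only [sum_apply, smul_apply, ContinuousLinearMap.proj_apply, smul_eq_mul, Finset.mul_sum,
    gaussianPDFRealPi, Function.comp_apply]
  refine Finset.sum_congr rfl fun j _ ↦ ?_
  rw [← Finset.mul_prod_erase _ _ (Finset.mem_univ j)]
  ring

theorem fderiv_gaussianPDFRealPi_single [DecidableEq ι] (m : ℝ) (V : ℝ≥0) (x : ι → ℝ) (i : ι) :
    fderiv ℝ (gaussianPDFRealPi m V) x (Pi.single i 1)
      = -((x i - m) / V) * gaussianPDFRealPi m V x := by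
  rw [(hasFDerivAt_gaussianPDFRealPi m V x).fderiv]
  simp only [smul_apply, sum_apply, ContinuousLinearMap.proj_apply, Pi.single_apply, smul_eq_mul,
    mul_ite, mul_one, mul_zero, Finset.sum_ite_eq', Finset.mem_univ, if_true]
  ring

end Density

variable {n : ℕ} {m : ℝ} {V : ℝ≥0}

theorem pi_gaussianReal_eq_withDensity (hV : V ≠ 0) :
    Measure.pi (fun _ : Fin n ↦ gaussianReal m V)
      = volume.withDensity fun x ↦ ENNReal.ofReal (gaussianPDFRealPi m V x) := by
  have : SigmaFinite (volume.withDensity (gaussianPDF m V)) :=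
    gaussianReal_of_var_ne_zero m hV ▸ inferInstance
  simp_rw [gaussianReal_of_var_ne_zero m hV,
    Measure.pi_withDensity fun _ ↦ measurable_gaussianPDF m V, volume_pi, gaussianPDFRealPi,
    ENNReal.ofReal_prod_of_nonneg fun i _ ↦ gaussianPDFReal_nonneg m V _, gaussianPDF]

theorem integral_pi_gaussianReal (hV : V ≠ 0) (g : (Fin n → ℝ) → ℝ) :
    ∫ x, g x ∂Measure.pi (fun _ ↦ gaussianReal m V) = ∫ x, gaussianPDFRealPi m V x * g x := by
  rw [pi_gaussianReal_eq_withDensity hV, integral_withDensity_eq_integral_toReal_smul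
    (measurable_gaussianPDFRealPi m V).ennreal_ofReal (ae_of_all _ fun _ ↦ ENNReal.ofReal_lt_top)]
  simp_rw [ENNReal.toReal_ofReal (gaussianPDFRealPi_nonneg m V _), smul_eq_mul]

theorem integrable_pi_gaussianReal_iff (hV : V ≠ 0) {g : (Fin n → ℝ) → ℝ} :
    Integrable g (Measure.pi fun _ ↦ gaussianReal m V)
      ↔ Integrable (fun x ↦ gaussianPDFRealPi m V x * g x) := by
  rw [pi_gaussianReal_eq_withDensity hV, integrable_withDensity_iff_integrable_smul'
    (measurable_gaussianPDFRealPi m V).ennreal_ofReal (ae_of_all _ fun _ ↦ ENNReal.ofReal_lt_top)]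
  simp_rw [ENNReal.toReal_ofReal (gaussianPDFRealPi_nonneg m V _), smul_eq_mul]

theorem integral_fderiv_single_pi_gaussianReal (hV : V ≠ 0) {g : (Fin n → ℝ) → ℝ}
    (hg : Differentiable ℝ g) (i : Fin n)
    (hg_int : Integrable g (Measure.pi fun _ ↦ gaussianReal m V))
    (hg'_int : Integrable (fun x ↦ fderiv ℝ g x (Pi.single i 1))
      (Measure.pi fun _ ↦ gaussianReal m V))
    (hxg_int : Integrable (fun x ↦ (x i - m) * g x) (Measure.pi fun _ ↦ gaussianReal m V)) :
    ∫ x, fderiv ℝ g x (Pi.single i 1) ∂Measure.pi (fun _ ↦ gaussianReal m V)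
      = (∫ x, (x i - m) * g x ∂Measure.pi (fun _ ↦ gaussianReal m V)) / V := by
  have hφ' : ∀ x, fderiv ℝ (gaussianPDFRealPi m V) x (Pi.single i 1) * g x
      = -(gaussianPDFRealPi m V x * ((x i - m) * g x) / V) := fun x ↦ by
    rw [fderiv_gaussianPDFRealPi_single]; ring
  rw [integral_pi_gaussianReal hV, integral_pi_gaussianReal hV, ← integral_div,
    integral_mul_fderiv_eq_neg_fderiv_mul_of_integrable (v := Pi.single i 1)
      (by simpa only [hφ', Pi.neg_def] using
        (((integrable_pi_gaussianReal_iff hV).1 hxg_int).div_const _).neg)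
      ((integrable_pi_gaussianReal_iff hV).1 hg'_int) ((integrable_pi_gaussianReal_iff hV).1 hg_int)
      (fun x _ ↦ (hasFDerivAt_gaussianPDFRealPi m V x).differentiableAt) (fun x _ ↦ hg x),
    ← integral_neg]
  simp only [hφ', neg_neg]

theorem integrable_one_add_abs_pow_gaussianReal (m : ℝ) (V : ℝ≥0) (k : ℕ) :
    Integrable (fun t ↦ (1 + |t|) ^ k) (gaussianReal m V) := by
  have hmem := (memLp_const (1 : ℝ)).add
    (memLp_id_gaussianReal' (μ := m) (v := V) k (ENNReal.natCast_ne_top k)).norm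
  refine hmem.integrable_norm_pow'.congr (ae_of_all _ fun t ↦ ?_)
  simp [abs_of_nonneg (add_nonneg zero_le_one (abs_nonneg t))]

theorem _root_.HasPolynomialGrowth.integrable_pi_gaussianReal {ι F : Type*} [Fintype ι]
    [NormedAddCommGroup F] {h : (ι → ℝ) → F} (hh : HasPolynomialGrowth h)
    (hm : AEStronglyMeasurable h (Measure.pi fun _ ↦ gaussianReal m V)) :
    Integrable h (Measure.pi fun _ ↦ gaussianReal m V) := by
  obtain ⟨C, hC, k, hk⟩ := hh.exists_nonneg
  refine ((Integrable.fintype_prod fun _ ↦ integrable_one_add_abs_pow_gaussianReal m V k).const_mul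
    C).mono' hm (ae_of_all _ fun x ↦ (hk x).trans ?_)
  rw [Finset.prod_pow]
  gcongr
  exact one_add_norm_le_prod_one_add_abs x

theorem integral_divg_pi_gaussianReal (hV : V ≠ 0) {g : (Fin n → ℝ) → (Fin n → ℝ)}
    (hg : ContDiff ℝ 1 g) (hg_growth : HasPolynomialGrowth g)
    (hg'_growth : HasPolynomialGrowth (fderiv ℝ g)) :
    ∫ v, divg g v ∂Measure.pi (fun _ ↦ gaussianReal 0 V)
      = (∫ v, ∑ i, v i * g v i ∂Measure.pi (fun _ ↦ gaussianReal 0 V)) / V := by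
  have hgi : ∀ i, ContDiff ℝ 1 fun v ↦ g v i := fun i ↦ (contDiff_apply ℝ ℝ i).comp hg
  have hcoord : ∀ i v, fderiv ℝ (fun z ↦ g z i) v (Pi.single i 1)
      = fderiv ℝ g v (Pi.single i 1) i := fun i v ↦ by
    rw [fderiv_apply ((hg.differentiable one_ne_zero) v)]
    rfl
  have hint_g : ∀ i, Integrable (fun v ↦ g v i) (Measure.pi fun _ ↦ gaussianReal 0 V) :=
    fun i ↦ (hg_growth.apply i).integrable_pi_gaussianReal (hgi i).continuous.aestronglyMeasurable
  have hint_dg : ∀ i, Integrable (fun v ↦ fderiv ℝ (fun z ↦ g z i) v (Pi.single i 1))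
      (Measure.pi fun _ ↦ gaussianReal 0 V) := fun i ↦ by
    simp only [hcoord]
    exact ((hg'_growth.clm_apply _).apply i).integrable_pi_gaussianReal (by fun_prop)
  have hint_vg : ∀ i, Integrable (fun v ↦ v i * g v i) (Measure.pi fun _ ↦ gaussianReal 0 V) :=
    fun i ↦ ((hasPolynomialGrowth_id.apply i).mul (hg_growth.apply i)).integrable_pi_gaussianReal
      ((continuous_apply i).mul (hgi i).continuous).aestronglyMeasurable
  calc ∫ v, divg g v ∂Measure.pi (fun _ ↦ gaussianReal 0 V)
      = ∑ i, ∫ v, fderiv ℝ (fun z ↦ g z i) v (Pi.single i 1)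
          ∂Measure.pi (fun _ ↦ gaussianReal 0 V) :=
        integral_finsetSum _ fun i _ ↦ hint_dg i
    _ = ∑ i, (∫ v, v i * g v i ∂Measure.pi (fun _ ↦ gaussianReal 0 V)) / V :=
        Finset.sum_congr rfl fun i _ ↦ by
          simpa only [sub_zero] using integral_fderiv_single_pi_gaussianReal hV
            ((hgi i).differentiable one_ne_zero) i (hint_g i) (hint_dg i)
            (by simpa only [sub_zero] using hint_vg i)
    _ = _ := by rw [integral_finsetSum _ fun i _ ↦ hint_vg i, Finset.sum_div]

end ProbabilityTheory

/-- **Gaussian integration by parts.** If `s : ℝ^D → ℝ^D` is a `C¹` vector field such that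
`s` and its Jacobian grow at most polynomially, and `v ~ N(0, σ²I)` with `σ > 0`, then
`E_v[div s(x + v)] = E_v[(vᵀ s(x + v)) / σ²]` for every `x`. -/
theorem gaussian_ibp_divergence {D : ℕ} (s : (Fin D → ℝ) → (Fin D → ℝ))
    (hs : ContDiff ℝ 1 s)
    (hgrow : ∃ C n, ∀ y : Fin D → ℝ, ‖s y‖ ≤ C * (1 + ‖y‖) ^ n)
    (hgrow' : ∃ C n, ∀ y : Fin D → ℝ, ‖fderiv ℝ s y‖ ≤ C * (1 + ‖y‖) ^ n)
    (σ : ℝ) (hσ : 0 < σ) (x : Fin D → ℝ) :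
    ∫ v, divg s (x + v) ∂(Measure.pi fun _ : Fin D => gaussianReal 0 (Real.toNNReal (σ ^ 2)))
      = ∫ v, (∑ i, v i * s (x + v) i) / σ ^ 2
          ∂(Measure.pi fun _ : Fin D => gaussianReal 0 (Real.toNNReal (σ ^ 2))) := by
  set V := (σ ^ 2).toNNReal
  have hV : V ≠ 0 := by simpa [V] using hσ.ne'
  have hVσ : (V : ℝ) = σ ^ 2 := Real.coe_toNNReal _ (by positivity)
  have hs_growth : HasPolynomialGrowth s := hgrow
  have hs'_growth : HasPolynomialGrowth (fderiv ℝ s) := hgrow'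
  have hshift : fderiv ℝ (fun v ↦ s (x + v)) = fun v ↦ fderiv ℝ s (x + v) :=
    funext fun v ↦ fderiv_comp_add_left x
  have hdivg : ∀ v, divg s (x + v) = divg (fun v ↦ s (x + v)) v := fun v ↦
    Finset.sum_congr rfl fun i _ ↦
      DFunLike.congr_fun (fderiv_comp_add_left (𝕜 := ℝ) (f := fun z ↦ s z i) (x := v) x).symm _
  simp only [hdivg]
  rw [integral_divg_pi_gaussianReal hV (g := fun v ↦ s (x + v))
    (hs.comp (contDiff_const.add contDiff_id)) (hs_growth.comp_const_add x)
    (hshift ▸ hs'_growth.comp_const_add x), integral_div, hVσ]
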